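/- Let g₃(n) = 2^{s₂(3n)} be the number of odd coefficients of (1+x+x^2+x^3)^n. Then lim_{n→∞} Var(ln(g₃(N)))/ln(n) = ln(2)/4; equivalently, lim_{n→∞} Var(s₂(3N))/log₂(n) = 1/4. -/

import Mathlib

open Finset Filter Topology Asymptotics Real

/-!
Write `f_c(k) = s₂(3k + c)` for the carries `c ∈ {0, 1, 2}`. Splitting off the last base-4 digit
`d` of `k` gives `f_c(4j + d) = s₂((3d + c) mod 4) + f_{⌊(3d + c)/4⌋}(j)`: for each `c` the four new
carries are `0, 1, 2, c`, the four digit sums add up to `4`, and the digits `0` and `2` come with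
the same new carry, so that the cross terms of the squares cancel. Hence, with `ℓ = ⌊log₄ n⌋`, the
centered sums `∑_{k<n} (f_c(k) - ℓ)` and `∑_{k<n} ((f_c(k) - ℓ)² - ℓ/2)` pass from `n / 4` to `n`
by an exact four-term recursion up to `O(ℓ²)` boundary terms, which makes them `O(n)`. Therefore
`Var(s₂(3N)) = ℓ/2 + O(1) = log₂ n / 4 + O(1)`.
-/

def s₂ (m : ℕ) : ℕ := (Nat.digits 2 m).sum

lemma s₂_add_two_mul {x : ℕ} (hx : x < 2) (y : ℕ) : s₂ (x + 2 * y) = x + s₂ y := by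
  by_cases h : x = 0 ∧ y = 0
  · simp [h.1, h.2, s₂]
  · rw [s₂, Nat.digits_add 2 one_lt_two x y hx (by tauto), List.sum_cons, s₂]

lemma s₂_add_four_mul {t : ℕ} (ht : t < 4) (a : ℕ) : s₂ (t + 4 * a) = s₂ t + s₂ a := by
  have hsplit : t + 4 * a = t % 2 + 2 * (t / 2 + 2 * a) := by omega
  have hsmall : s₂ t = t % 2 + t / 2 := by interval_cases t <;> simp [s₂]
  rw [hsplit, s₂_add_two_mul (Nat.mod_lt _ two_pos), s₂_add_two_mul (by omega), hsmall]
  ring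

lemma s₂_le_of_lt_two_pow {m k : ℕ} (hm : m < 2 ^ k) : s₂ m ≤ k :=
  calc s₂ m ≤ (Nat.digits 2 m).length * 1 :=
        List.sum_le_card_nsmul _ _ fun _ hd => Nat.le_of_lt_succ (Nat.digits_lt_base one_lt_two hd)
    _ ≤ k := by rw [mul_one]; exact (Nat.digits_length_le_iff one_lt_two m).2 hm

def s₂ThreeMulAdd (c k : ℕ) : ℕ := s₂ (3 * k + c)

lemma s₂ThreeMulAdd_le {c : ℕ} (hc : c ≤ 3) (k : ℕ) :
    s₂ThreeMulAdd c k ≤ 2 * Nat.log 4 k + 4 := by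
  refine s₂_le_of_lt_two_pow ?_
  have hk := Nat.lt_pow_succ_log_self (by norm_num : 1 < 4) k
  calc 3 * k + c < 4 ^ (Nat.log 4 k + 2) := by rw [pow_succ]; omega
    _ = 2 ^ (2 * Nat.log 4 k + 4) := by rw [show (4 : ℕ) = 2 ^ 2 from rfl, ← pow_mul]; ring_nf

lemma s₂ThreeMulAdd_four_mul_add (c j d : ℕ) :
    s₂ThreeMulAdd c (4 * j + d) = s₂ ((3 * d + c) % 4) + s₂ThreeMulAdd ((3 * d + c) / 4) j := by
  have h : 3 * (4 * j + d) + c = (3 * d + c) % 4 + 4 * (3 * j + (3 * d + c) / 4) := by omega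
  rw [s₂ThreeMulAdd, h, s₂_add_four_mul (Nat.mod_lt _ (by norm_num)), s₂ThreeMulAdd]

lemma sum_range_mul_eq_sum_sum {M : Type*} [AddCommMonoid M] (F : ℕ → M) (m q : ℕ) :
    ∑ k ∈ range (m * q), F k = ∑ j ∈ range q, ∑ d ∈ range m, F (m * j + d) := by
  induction q with
  | zero => simp
  | succ q ih => rw [mul_add_one, sum_range_add, ih, sum_range_succ]

lemma sum_s₂ThreeMulAdd_block {c : ℕ} (hc : c < 3) (x : ℝ) (j : ℕ) :
    ∑ d ∈ range 4, ((s₂ThreeMulAdd c (4 * j + d) : ℝ) - (x + 1))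
      = ∑ i ∈ range 3, ((s₂ThreeMulAdd i j : ℝ) - x) + ((s₂ThreeMulAdd c j : ℝ) - x) := by
  interval_cases c <;> simp [sum_range_succ, s₂ThreeMulAdd_four_mul_add, s₂] <;> ring

lemma sum_sq_s₂ThreeMulAdd_block {c : ℕ} (hc : c < 3) (x : ℝ) (j : ℕ) :
    ∑ d ∈ range 4, (((s₂ThreeMulAdd c (4 * j + d) : ℝ) - (x + 1)) ^ 2 - (x + 1) / 2)
      = ∑ i ∈ range 3, (((s₂ThreeMulAdd i j : ℝ) - x) ^ 2 - x / 2)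
        + (((s₂ThreeMulAdd c j : ℝ) - x) ^ 2 - x / 2) := by
  interval_cases c <;> simp [sum_range_succ, s₂ThreeMulAdd_four_mul_add, s₂] <;> ring

def levelSum (Φ : ℝ → ℝ → ℝ) (f : ℕ → ℝ) (n : ℕ) : ℝ :=
  ∑ k ∈ range n, Φ (Nat.log 4 n) (f k)

lemma levelSum_eq {Φ : ℝ → ℝ → ℝ} {f : ℕ → ℕ → ℝ} {c : ℕ}
    (hΦ : ∀ x j, ∑ d ∈ range 4, Φ (x + 1) (f c (4 * j + d))
      = ∑ i ∈ range 3, Φ x (f i j) + Φ x (f c j)) (n : ℕ) :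
    levelSum Φ (f c) n = ∑ i ∈ range 3, levelSum Φ (f i) (n / 4) + levelSum Φ (f c) (n / 4)
      + ∑ d ∈ range (n % 4), Φ (Nat.log 4 n) (f c (4 * (n / 4) + d)) := by
  have hn : n = 4 * (n / 4) + n % 4 := (Nat.div_add_mod n 4).symm
  set q := n / 4
  rw [levelSum, hn, sum_range_add, ← hn, sum_range_mul_eq_sum_sum]
  congr 1
  rcases Nat.eq_zero_or_pos q with hq | hq
  · simp [hq, levelSum]
  have hlog : (Nat.log 4 n : ℝ) = Nat.log 4 q + 1 := by
    have h1 : 1 ≤ Nat.log 4 n := Nat.le_log_of_pow_le (by norm_num) (by omega)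
    rw [Nat.log_div_base]; push_cast [h1]; ring
  simp only [levelSum, hlog, hΦ, sum_add_distrib]
  rw [sum_comm]

lemma le_five_mul_of_le_four_mul_div_four {a : ℕ → ℝ} {K : ℝ} (hK : 0 ≤ K) (h0 : a 0 ≤ 0)
    (ha : ∀ n, a n ≤ 4 * a (n / 4) + K * (Nat.log 4 n + 1) ^ 2) (n : ℕ) :
    a n ≤ 5 * K * n := by
  suffices h : ∀ n, 1 ≤ n → a n ≤ K * (5 * n - (Nat.log 4 n + 2) ^ 2) by
    rcases Nat.eq_zero_or_pos n with rfl | hn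
    · simpa using h0
    · nlinarith [h n hn, sq_nonneg ((Nat.log 4 n : ℝ) + 2)]
  intro n hn
  induction n using Nat.strong_induction_on with
  | _ n ih =>
    rcases lt_or_ge n 4 with hn4 | hn4
    · have hlog : Nat.log 4 n = 0 := Nat.log_of_lt hn4
      have hq : n / 4 = 0 := by omega
      have h1 : (1 : ℝ) ≤ n := by exact_mod_cast hn
      have := ha n
      rw [hq, hlog] at this
      rw [hlog]; push_cast at this ⊢; nlinarith
    · have hq := ih (n / 4) (by omega) (by omega)
      have h1 : 1 ≤ Nat.log 4 n := Nat.le_log_of_pow_le (by norm_num) hn4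
      have hlog : (Nat.log 4 (n / 4) : ℝ) = Nat.log 4 n - 1 := by
        rw [Nat.log_div_base]; push_cast [h1]; ring
      have h4q : 4 * ((n / 4 : ℕ) : ℝ) ≤ n := by exact_mod_cast Nat.mul_div_le n 4
      have hL : (1 : ℝ) ≤ Nat.log 4 n := by exact_mod_cast h1
      rw [hlog] at hq
      have hgap : 0 ≤ K * (2 * (Nat.log 4 n : ℝ) ^ 2 + 2 * Nat.log 4 n - 1) :=
        mul_nonneg hK (by nlinarith)
      nlinarith [ha n, mul_le_mul_of_nonneg_left h4q hK]

noncomputable def centeredSum (c n : ℕ) : ℝ :=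
  levelSum (fun x y => y - x) (fun k => s₂ThreeMulAdd c k) n

noncomputable def centeredSqSum (c n : ℕ) : ℝ :=
  levelSum (fun x y => (y - x) ^ 2 - x / 2) (fun k => s₂ThreeMulAdd c k) n

noncomputable def centeredError (n : ℕ) : ℝ :=
  ∑ c ∈ range 3, (|centeredSum c n| + |centeredSqSum c n|)

lemma abs_sub_log_four_add_abs_sq_sub_le {c k n : ℕ} (hc : c ≤ 3) (hk : k ≤ n) :
    |(s₂ThreeMulAdd c k : ℝ) - Nat.log 4 n|
      + |((s₂ThreeMulAdd c k : ℝ) - Nat.log 4 n) ^ 2 - Nat.log 4 n / 2|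
      ≤ 21 * (Nat.log 4 n + 1) ^ 2 := by
  have hle : (s₂ThreeMulAdd c k : ℝ) ≤ 2 * Nat.log 4 n + 4 := by
    exact_mod_cast (s₂ThreeMulAdd_le hc k).trans (by gcongr)
  have h0 : (0 : ℝ) ≤ s₂ThreeMulAdd c k := Nat.cast_nonneg _
  set L := (Nat.log 4 n : ℝ)
  have hL : 0 ≤ L := Nat.cast_nonneg _
  have hy : |(s₂ThreeMulAdd c k : ℝ) - L| ≤ L + 4 := abs_le.2 ⟨by linarith, by linarith⟩
  have hy2 : |((s₂ThreeMulAdd c k : ℝ) - L) ^ 2 - L / 2| ≤ (L + 4) ^ 2 + L := by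
    have hsq := pow_le_pow_left₀ (abs_nonneg _) hy 2
    rw [sq_abs] at hsq
    rw [abs_le]; constructor <;> nlinarith
  nlinarith

lemma abs_centeredSum_add_abs_centeredSqSum_le {c : ℕ} (hc : c < 3) (n : ℕ) :
    |centeredSum c n| + |centeredSqSum c n|
      ≤ centeredError (n / 4) + (|centeredSum c (n / 4)| + |centeredSqSum c (n / 4)|)
        + 63 * (Nat.log 4 n + 1) ^ 2 := by
  set L := (Nat.log 4 n : ℝ)
  set r := n % 4
  set f : ℕ → ℝ := fun d => s₂ThreeMulAdd c (4 * (n / 4) + d)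
  have hmean : centeredSum c n = ∑ i ∈ range 3, centeredSum i (n / 4) + centeredSum c (n / 4)
      + ∑ d ∈ range r, (f d - L) :=
    levelSum_eq (f := fun i k => s₂ThreeMulAdd i k) (sum_s₂ThreeMulAdd_block hc) n
  have hvar : centeredSqSum c n = ∑ i ∈ range 3, centeredSqSum i (n / 4) + centeredSqSum c (n / 4)
      + ∑ d ∈ range r, ((f d - L) ^ 2 - L / 2) :=
    levelSum_eq (Φ := fun x y => (y - x) ^ 2 - x / 2) (f := fun i k => s₂ThreeMulAdd i k)
      (sum_sq_s₂ThreeMulAdd_block hc) n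
  have hrem : |∑ d ∈ range r, (f d - L)| + |∑ d ∈ range r, ((f d - L) ^ 2 - L / 2)|
      ≤ 63 * (L + 1) ^ 2 :=
    calc _ ≤ ∑ d ∈ range r, (|f d - L| + |(f d - L) ^ 2 - L / 2|) := by
          rw [sum_add_distrib]; gcongr <;> exact abs_sum_le_sum_abs _ _
      _ ≤ ∑ d ∈ range r, 21 * (L + 1) ^ 2 := by
          gcongr with d hd
          exact abs_sub_log_four_add_abs_sq_sub_le hc.le (by have := mem_range.1 hd; omega)
      _ ≤ 63 * (L + 1) ^ 2 := by
          have hr : (r : ℝ) ≤ 3 := by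
            exact_mod_cast Nat.le_of_lt_succ (Nat.mod_lt n (by norm_num))
          rw [sum_const, card_range, nsmul_eq_mul]
          nlinarith [sq_nonneg (L + 1)]
  have h1 := abs_sum_le_sum_abs (fun i => centeredSum i (n / 4)) (range 3)
  have h2 := abs_sum_le_sum_abs (fun i => centeredSqSum i (n / 4)) (range 3)
  rw [hmean, hvar, centeredError, sum_add_distrib]
  linarith [abs_add_three (∑ i ∈ range 3, centeredSum i (n / 4)) (centeredSum c (n / 4))
      (∑ d ∈ range r, (f d - L)),
    abs_add_three (∑ i ∈ range 3, centeredSqSum i (n / 4)) (centeredSqSum c (n / 4))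
      (∑ d ∈ range r, ((f d - L) ^ 2 - L / 2))]

lemma centeredError_le (n : ℕ) :
    centeredError n ≤ 4 * centeredError (n / 4) + 189 * (Nat.log 4 n + 1) ^ 2 :=
  calc centeredError n ≤ ∑ c ∈ range 3, (centeredError (n / 4)
        + (|centeredSum c (n / 4)| + |centeredSqSum c (n / 4)|) + 63 * (Nat.log 4 n + 1) ^ 2) :=
        sum_le_sum fun c hc => abs_centeredSum_add_abs_centeredSqSum_le (mem_range.1 hc) n
    _ = 4 * centeredError (n / 4) + 189 * (Nat.log 4 n + 1) ^ 2 := by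
        rw [sum_add_distrib, sum_add_distrib, ← centeredError]; simp; ring

lemma centeredError_le_mul (n : ℕ) : centeredError n ≤ 945 * n := by
  have h := le_five_mul_of_le_four_mul_div_four (by norm_num) (by simp [centeredError,
    centeredSum, centeredSqSum, levelSum]) centeredError_le n
  linarith

noncomputable def empiricalVariance (x : ℕ → ℝ) (n : ℕ) : ℝ :=
  (1 / (n : ℝ)) * ∑ k ∈ range n, x k ^ 2 - ((1 / (n : ℝ)) * ∑ k ∈ range n, x k) ^ 2

lemma empiricalVariance_eq_sub (x : ℕ → ℝ) (t : ℝ) (n : ℕ) :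
    empiricalVariance x n
      = (1 / (n : ℝ)) * ∑ k ∈ range n, (x k - t) ^ 2
        - ((1 / (n : ℝ)) * ∑ k ∈ range n, (x k - t)) ^ 2 := by
  rcases Nat.eq_zero_or_pos n with rfl | hn
  · simp [empiricalVariance]
  have hn' : (n : ℝ) ≠ 0 := by positivity
  simp only [empiricalVariance, sub_sq, sum_add_distrib, sum_sub_distrib, ← sum_mul, ← mul_sum,
    sum_const, card_range, nsmul_eq_mul]
  field_simp
  ring

lemma empiricalVariance_const_mul (a : ℝ) (x : ℕ → ℝ) (n : ℕ) :
    empiricalVariance (fun k => a * x k) n = a ^ 2 * empiricalVariance x n := by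
  simp only [empiricalVariance, mul_pow, ← mul_sum]
  ring

lemma abs_empiricalVariance_sub_log_le {n : ℕ} (hn : 1 ≤ n) :
    |empiricalVariance (fun k => s₂ThreeMulAdd 0 k) n - Nat.log 4 n / 2| ≤ 945 + 945 ^ 2 := by
  have hn' : (0 : ℝ) < n := by exact_mod_cast hn
  have hbound : |centeredSum 0 n| + |centeredSqSum 0 n| ≤ 945 * n :=
    (single_le_sum (f := fun c => |centeredSum c n| + |centeredSqSum c n|)
      (fun c _ => by positivity) (mem_range.2 (by norm_num))).trans (centeredError_le_mul n)
  have hsum : |centeredSum 0 n| ≤ 945 * n := by linarith [abs_nonneg (centeredSqSum 0 n)]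
  have hsq : |centeredSqSum 0 n| ≤ 945 * n := by linarith [abs_nonneg (centeredSum 0 n)]
  have hvar : empiricalVariance (fun k => s₂ThreeMulAdd 0 k) n - Nat.log 4 n / 2
      = centeredSqSum 0 n / n - (centeredSum 0 n / n) ^ 2 := by
    rw [empiricalVariance_eq_sub _ (Nat.log 4 n)]
    simp only [centeredSum, centeredSqSum, levelSum, sum_sub_distrib, sum_const, card_range,
      nsmul_eq_mul]
    field_simp
    ring
  have h1 : |centeredSum 0 n / n| ≤ 945 := by
    rwa [abs_div, abs_of_pos hn', div_le_iff₀ hn']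
  have h2 : |centeredSqSum 0 n / n| ≤ 945 := by
    rwa [abs_div, abs_of_pos hn', div_le_iff₀ hn']
  have h3 : (centeredSum 0 n / n) ^ 2 ≤ 945 ^ 2 := by
    rw [← sq_abs]; exact pow_le_pow_left₀ (abs_nonneg _) h1 2
  rw [hvar]
  refine (abs_sub _ _).trans ?_
  rw [abs_sq]
  linarith

lemma abs_logb_two_sub_two_mul_log_four_le (n : ℕ) : |logb 2 n - 2 * Nat.log 4 n| ≤ 2 := by
  have hfloor : ⌊logb 4 n⌋ = Nat.log 4 n := by
    rw [show (4 : ℝ) = (4 : ℕ) by norm_num, Real.floor_logb_natCast (Nat.cast_nonneg _),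
      Int.log_natCast]
  have h4 : logb 2 n = 2 * logb 4 n := by
    rw [logb, logb, show (4 : ℝ) = 2 ^ 2 by norm_num, Real.log_pow]
    field_simp
    norm_num
  have hlo := Int.floor_le (logb 4 n)
  have hhi := Int.lt_floor_add_one (logb 4 n)
  rw [hfloor] at hlo hhi
  push_cast at hlo hhi
  rw [h4, abs_le]; constructor <;> linarith

lemma tendsto_div_of_abs_sub_mul_le {α : Type*} {l : Filter α} {u v : α → ℝ} {a C : ℝ}
    (hv : Tendsto v l atTop) (h : ∀ᶠ x in l, |u x - a * v x| ≤ C) :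
    Tendsto (fun x => u x / v x) l (𝓝 a) := by
  have hO : (fun x => u x - a * v x) =O[l] (fun _ => (1 : ℝ)) :=
    IsBigO.of_bound C (by simpa using h)
  have ho : (fun _ => (1 : ℝ)) =o[l] v :=
    (isLittleO_one_left_iff ℝ).2 (tendsto_norm_atTop_atTop.comp hv)
  have hlim := (hO.trans_isLittleO ho).tendsto_div_nhds_zero.add_const a
  rw [zero_add] at hlim
  refine hlim.congr' ?_
  filter_upwards [hv.eventually_gt_atTop 0] with x hx
  field_simp
  ring

lemma tendsto_empiricalVariance_div_logb :
    Tendsto (fun n => empiricalVariance (fun k => s₂ThreeMulAdd 0 k) n / logb 2 n)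
      atTop (𝓝 (1 / 4)) := by
  refine tendsto_div_of_abs_sub_mul_le (C := 945 + 945 ^ 2 + 1)
    ((tendsto_logb_atTop one_lt_two).comp tendsto_natCast_atTop_atTop) ?_
  filter_upwards [eventually_ge_atTop 1] with n hn
  have h1 := abs_empiricalVariance_sub_log_le hn
  have h2 := abs_logb_two_sub_two_mul_log_four_le n
  calc _ = |(empiricalVariance (fun k => s₂ThreeMulAdd 0 k) n - Nat.log 4 n / 2)
        - (logb 2 n - 2 * Nat.log 4 n) / 4| := by ring_nf
    _ ≤ _ := by
      refine (abs_sub _ _).trans ?_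
      rw [abs_div, abs_of_pos (by norm_num : (0 : ℝ) < 4)]
      linarith

theorem quadrinomial_typical_dispersion :
    (Filter.Tendsto
      (fun n : ℕ =>
        ((1 / (n : ℝ)) * (∑ k ∈ Finset.range n,
              (Real.log ((2 : ℝ) ^ (Nat.digits 2 (3 * k)).sum)) ^ 2)
          - ((1 / (n : ℝ)) * ∑ k ∈ Finset.range n,
              Real.log ((2 : ℝ) ^ (Nat.digits 2 (3 * k)).sum)) ^ 2)
          / Real.log n)
      Filter.atTop (nhds (Real.log 2 / 4)))
    ∧
    (Filter.Tendsto
      (fun n : ℕ =>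
        ((1 / (n : ℝ)) * (∑ k ∈ Finset.range n, (((Nat.digits 2 (3 * k)).sum : ℝ)) ^ 2)
          - ((1 / (n : ℝ)) * ∑ k ∈ Finset.range n, ((Nat.digits 2 (3 * k)).sum : ℝ)) ^ 2)
          / Real.logb 2 n)
      Filter.atTop (nhds (1 / 4))) := by
  refine ⟨?_, tendsto_empiricalVariance_div_logb⟩
  have hlog : ∀ k, Real.log ((2 : ℝ) ^ (Nat.digits 2 (3 * k)).sum)
      = Real.log 2 * (s₂ThreeMulAdd 0 k : ℝ) := fun k => by
    rw [Real.log_pow, mul_comm]; rfl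
  simp only [hlog]
  rw [← mul_one_div]
  refine (tendsto_empiricalVariance_div_logb.const_mul (Real.log 2)).congr fun n => ?_
  change _ = empiricalVariance (fun k => Real.log 2 * (s₂ThreeMulAdd 0 k : ℝ)) n / Real.log n
  rw [empiricalVariance_const_mul, logb, div_div_eq_mul_div]
  ring
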